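/- arXiv:1705.03686 — 6 statements merged into one kernel-verified Lean document; each statement's English description precedes it below -/
import Mathlib

section
/- Let G = (V, W, E) be a finite odd bipartite graph (for every nonempty X ⊆ W there is v ∈ V with |X ∩ N(v)| odd). Then there exists a subset V' ⊆ V with |V'| ≤ |W| such that the induced bipartite subgraph G[V' ∪ W] is still odd. -/
/-! Over `ZMod 2`, write `χ v : W → ZMod 2` for the indicator of the neighbourhood of `v`; then
`|X ∩ N(v)|` is odd exactly when the linear form `x ↦ ∑ w ∈ X, x w` is nonzero at `χ v`.
Choose `V'` so that the `χ v`, `v ∈ V'`, form a basis of the span of all the `χ v`; it has at most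
`dim (W → ZMod 2) = |W|` elements. A linear form that vanishes on every `χ v` with `v ∈ V'` vanishes
on their span, hence on every `χ v`, so oddness of `G` passes to `G[V' ∪ W]`. -/

open Finset Submodule

theorem exists_finset_card_le_finrank_range_subset_span {K M ι : Type*} [Field K]
    [AddCommGroup M] [Module K M] [FiniteDimensional K M] (v : ι → M) :
    ∃ s : Finset ι, #s ≤ Module.finrank K M ∧ Set.range v ⊆ span K (v '' s) := by
  obtain ⟨b, -, -, hspan, hli⟩ :=
    exists_linearIndepOn_extension (linearIndepOn_empty K v) (Set.empty_subset Set.univ)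
  have : Finite b := LinearIndependent.finite_of_isNoetherian hli
  have : Fintype b := Fintype.ofFinite b
  refine ⟨b.toFinset, ?_, by simpa using hspan⟩
  simpa using hli.fintype_card_le_finrank

theorem exists_mem_apply_ne_zero_of_range_subset_span {R M N ι : Type*} [Semiring R]
    [AddCommMonoid M] [Module R M] [AddCommMonoid N] [Module R N] {v : ι → M} {s : Set ι}
    (hs : Set.range v ⊆ span R (v '' s)) (φ : M →ₗ[R] N) {i : ι} (hi : φ (v i) ≠ 0) :
    ∃ j ∈ s, φ (v j) ≠ 0 := by
  by_contra! h
  have hker : span R (v '' s) ≤ LinearMap.ker φ := by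
    rw [span_le]
    rintro _ ⟨j, hj, rfl⟩
    exact h j hj
  exact hi (hker (hs ⟨i, rfl⟩))

section Parity

variable {V W : Type*} (E : V → W → Prop) [∀ v, DecidablePred (E v)]

def neighborIndicator (v : V) : W → ZMod 2 := fun w => if E v w then 1 else 0

theorem sum_proj_neighborIndicator_ne_zero_iff (X : Finset W) (v : V) :
    (∑ w ∈ X, LinearMap.proj w : (W → ZMod 2) →ₗ[ZMod 2] ZMod 2) (neighborIndicator E v) ≠ 0 ↔
      Odd (X.filter (E v)).card := by
  simp [neighborIndicator, Finset.sum_boole, ZMod.natCast_ne_zero_iff_odd]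

end Parity

theorem exists_small_odd_subset_general {V W : Type*} [Fintype W]
    (E : V → W → Prop) [∀ v, DecidablePred (E v)]
    (hodd : ∀ X : Finset W, X.Nonempty → ∃ v : V, Odd (X.filter (fun w => E v w)).card) :
    ∃ V' : Finset V, V'.card ≤ Fintype.card W ∧
      ∀ X : Finset W, X.Nonempty → ∃ v ∈ V', Odd (X.filter (fun w => E v w)).card := by
  obtain ⟨V', hcard, hspan⟩ :=
    exists_finset_card_le_finrank_range_subset_span (K := ZMod 2) (neighborIndicator E)
  refine ⟨V', by simpa using hcard, fun X hX => ?_⟩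
  obtain ⟨v, hv⟩ := hodd X hX
  obtain ⟨u, hu, hXu⟩ := exists_mem_apply_ne_zero_of_range_subset_span hspan _
    ((sum_proj_neighborIndicator_ne_zero_iff E X v).2 hv)
  exact ⟨u, hu, (sum_proj_neighborIndicator_ne_zero_iff E X u).1 hXu⟩

theorem exists_small_odd_subset {V W : Type*} [Fintype V] [Fintype W] [DecidableEq V]
    (E : V → W → Prop) [∀ v, DecidablePred (E v)]
    (hodd : ∀ X : Finset W, X.Nonempty → ∃ v : V, Odd (X.filter (fun w => E v w)).card) :
    ∃ V' : Finset V, V'.card ≤ Fintype.card W ∧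
      ∀ X : Finset W, X.Nonempty → ∃ v ∈ V', Odd (X.filter (fun w => E v w)).card :=
  exists_small_odd_subset_general E hodd
end

section
/- Let G be a 3-regular graph, σ a permutation of E(G), and B(G,σ) the bipartite graph with parts V_B = V(G)×{0,1} and W_B = E(G), where (v,0) is adjacent to e iff v ∈ e and (v,1) is adjacent to e iff v ∈ σ(e). Then B(G,σ) is even (i.e., not odd) if and only if there is a nonempty 2-regular edge set C ⊆ E(G) such that σ(C) is also 2-regular in G. -/
/-! A set X of edges witnesses evenness iff every vertex meets both X and σ(X) in an even
number of edges. In a 3-regular graph a vertex meets at most three edges of any set, so an even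
count is 0 or 2, which is 2-regularity of X and of σ(X). -/

open Finset

namespace SimpleGraph

variable {V : Type*} [DecidableEq V] {G : SimpleGraph V}

theorem card_filter_mem_edge_le_degree (X : Finset G.edgeSet) (v : V)
    [Fintype (G.neighborSet v)] :
    #(X.filter fun e : G.edgeSet => v ∈ (e : Sym2 V)) ≤ G.degree v := by
  rw [← card_incidenceFinset_eq_degree, ← card_image_of_injective _ Subtype.coe_injective]
  refine card_le_card fun s hs => ?_
  obtain ⟨e, he, rfl⟩ := mem_image.mp hs
  exact (mem_incidenceFinset G v _).mpr ⟨e.2, (mem_filter.mp he).2⟩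

theorem IsRegularOfDegree.even_card_filter_mem_edge_iff [Fintype V] [DecidableRel G.Adj]
    (hreg : G.IsRegularOfDegree 3) (X : Finset G.edgeSet) (v : V) :
    Even #(X.filter fun e : G.edgeSet => v ∈ (e : Sym2 V)) ↔
      #(X.filter fun e : G.edgeSet => v ∈ (e : Sym2 V)) = 0 ∨
        #(X.filter fun e : G.edgeSet => v ∈ (e : Sym2 V)) = 2 := by
  have hle := card_filter_mem_edge_le_degree X v
  rw [hreg v] at hle
  rw [Nat.even_iff]
  omega

end SimpleGraph

theorem bipartite_even_iff_two_regular {V : Type*} [Fintype V] [DecidableEq V]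
    (G : SimpleGraph V) [DecidableRel G.Adj] (hreg : G.IsRegularOfDegree 3)
    (σ : Equiv.Perm G.edgeSet) :
    -- B(G,σ) is even, i.e. not odd:
    (¬ ∀ X : Finset G.edgeSet, X.Nonempty →
        ∃ (v : V) (b : Bool),
          Odd (X.filter (fun e => v ∈ ((if b then σ e else e : G.edgeSet) : Sym2 V))).card) ↔
      -- iff there is a nonempty 2-regular edge set C with σ(C) also 2-regular:
      ∃ C : Finset G.edgeSet, C.Nonempty ∧
        (∀ v : V, (C.filter (fun e => v ∈ ((e : G.edgeSet) : Sym2 V))).card = 0 ∨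
                  (C.filter (fun e => v ∈ ((e : G.edgeSet) : Sym2 V))).card = 2) ∧
        (∀ v : V, ((C.image σ).filter (fun e => v ∈ ((e : G.edgeSet) : Sym2 V))).card = 0 ∨
                  ((C.image σ).filter (fun e => v ∈ ((e : G.edgeSet) : Sym2 V))).card = 2) := by
  have card_filter_perm (X : Finset G.edgeSet) (v : V) :
      #(X.filter fun e => v ∈ (σ e : Sym2 V)) =
        #((X.image σ).filter fun e : G.edgeSet => v ∈ (e : Sym2 V)) := by
    rw [filter_image, card_image_of_injective _ σ.injective]
  push Not
  simp only [Nat.not_odd_iff_even, Bool.forall_bool, Bool.false_eq_true, if_true, if_false,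
    forall_and, card_filter_perm, hreg.even_card_filter_mem_edge_iff]
end

section
/- For n ≥ 4, the automorphism group of the graph G_n (the 2n-cycle with all main diagonals added, i.e., vertex set {1,…,2n}, edges {i, i+1 mod 2n} for 1 ≤ i ≤ 2n and {i, i+n} for 1 ≤ i ≤ n) is the dihedral group of order 4n, generated by the rotation (1,2,…,2n) and the reflection (1,2n)(2,2n−1)···(n,n+1). -/
/-!
For `n ≥ 4` the diagonals of the Möbius ladder `cycleWithDiagonals n` are intrinsic: they are the
edges `ij` such that every other edge at `i` lies on a 4-cycle through `ij`; a rim edge `i (i+1)`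
fails this, as `i - 1` and `i + 1` have no common neighbour besides `i`. Hence an automorphism
maps rim edges to rim edges, i.e. it is an automorphism of the `2n`-cycle, so it has the form
`x ↦ ±x + c`. These maps are the image of a faithful action of the dihedral group of order `4n`,
generated by `x ↦ x + 1` and `x ↦ 1 - x`.
-/

/-- The `2n`-cycle with diagonals: vertices `ZMod (2n)`, edges between consecutive
vertices and between antipodal vertices. -/
def cycleWithDiagonals (n : ℕ) : SimpleGraph (ZMod (2 * n)) :=
  SimpleGraph.fromRel (fun i j => j - i = 1 ∨ j - i = (n : ZMod (2 * n)))

namespace ZMod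

theorem intCast_ne_zero_of_abs_lt {m : ℕ} {k : ℤ} (hk : k ≠ 0) (hlo : -(m : ℤ) < k)
    (hhi : k < m) : (k : ZMod m) ≠ 0 := fun h =>
  hk (Int.eq_zero_of_abs_lt_dvd ((intCast_zmod_eq_zero_iff_dvd k m).1 h) (abs_lt.2 ⟨hlo, hhi⟩))

theorem neg_natCast_of_two_mul (n : ℕ) : -(n : ZMod (2 * n)) = n := by
  have h : ((2 * n : ℕ) : ZMod (2 * n)) = 0 := natCast_self _
  push_cast at h
  linear_combination -h

theorem eq_add_mul_of_sub_eq_one_or_neg_one {m : ℕ} {σ : ZMod m → ZMod m}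
    (hσ : Function.Injective σ) (h : ∀ x, σ (x + 1) - σ x = 1 ∨ σ (x + 1) - σ x = -1)
    (x : ZMod m) : σ x = σ 0 + x * (σ 1 - σ 0) := by
  have step_periodic : Function.Periodic (fun x => σ (x + 1) - σ x) (1 : ZMod m) := by
    intro x
    -- a change of direction would give `σ (x + 2) = σ x`, which forces `2 = 0`
    have two_eq_zero : σ (x + 1 + 1) = σ x → (2 : ZMod m) = 0 := fun he => by
      linear_combination hσ he
    dsimp only
    rcases h x with ha | ha <;> rcases h (x + 1) with hb | hb <;> rw [ha, hb]
    · linear_combination -two_eq_zero (by linear_combination ha + hb)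
    · linear_combination two_eq_zero (by linear_combination ha + hb)
  have step_eq x : σ (x + 1) - σ x = σ 1 - σ 0 := by
    obtain ⟨k, rfl⟩ := intCast_surjective x
    simpa using step_periodic.int_mul_eq k
  have affine_periodic : Function.Periodic (fun x => σ x - x * (σ 1 - σ 0)) (1 : ZMod m) :=
    fun x => by linear_combination step_eq x
  obtain ⟨k, rfl⟩ := intCast_surjective x
  have := affine_periodic.int_mul_eq k
  simp only [mul_one, zero_mul, sub_zero] at this
  linear_combination this

end ZMod

namespace DihedralGroup

def toPerm (m : ℕ) : DihedralGroup m →* Equiv.Perm (ZMod m) where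
  toFun
    | r i => Equiv.addLeft i
    | sr i => (Equiv.neg _).trans (Equiv.addLeft (-i))
  map_one' := by ext x; exact zero_add x
  map_mul' := by
    rintro (i | i) (j | j) <;> ext x <;>
      simp only [r_mul_r, r_mul_sr, sr_mul_r, sr_mul_sr, Equiv.Perm.mul_apply, Equiv.trans_apply,
        Equiv.coe_addLeft, Equiv.neg_apply] <;> ring

variable {m : ℕ}

@[simp]
theorem toPerm_r_apply (i x : ZMod m) : toPerm m (r i) x = i + x := rfl

@[simp]
theorem toPerm_sr_apply (i x : ZMod m) : toPerm m (sr i) x = -i + -x := rfl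

theorem toPerm_injective (h2 : (2 : ZMod m) ≠ 0) : Function.Injective (toPerm m) := by
  intro g g' h
  have h0 := DFunLike.congr_fun h 0
  have h1 := DFunLike.congr_fun h 1
  rcases g with i | i <;> rcases g' with j | j <;>
    simp only [toPerm_r_apply, toPerm_sr_apply, add_zero, neg_zero] at h0 h1
  · rw [h0]
  · exact absurd (by linear_combination h1 - h0) h2
  · exact absurd (by linear_combination h0 - h1) h2
  · rw [neg_inj.1 h0]

theorem range_toPerm :
    (toPerm m).range = Subgroup.closure
      {Equiv.addLeft 1, (Equiv.neg (ZMod m)).trans (Equiv.addLeft 1)} := by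
  have rotation_eq : Equiv.addLeft 1 = toPerm m (r 1) := rfl
  have reflection_eq : (Equiv.neg (ZMod m)).trans (Equiv.addLeft 1) = toPerm m (sr (-1)) := by
    ext x; simp
  apply le_antisymm
  · have r_mem (i : ZMod m) : toPerm m (r i) ∈ Subgroup.closure
        {Equiv.addLeft 1, (Equiv.neg (ZMod m)).trans (Equiv.addLeft 1)} := by
      obtain ⟨k, rfl⟩ := ZMod.intCast_surjective i
      rw [← r_one_zpow, map_zpow, ← rotation_eq]
      exact zpow_mem (Subgroup.subset_closure (Set.mem_insert _ _)) k
    rintro _ ⟨i | i, rfl⟩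
    · exact r_mem i
    · rw [show sr i = sr (-1) * r (i + 1) by rw [sr_mul_r]; ring_nf, map_mul, ← reflection_eq]
      exact mul_mem (Subgroup.subset_closure (Set.mem_insert_of_mem _ rfl)) (r_mem _)
  · rw [Subgroup.closure_le, reflection_eq, rotation_eq]
    rintro _ (rfl | rfl) <;> exact ⟨_, rfl⟩

end DihedralGroup

namespace SimpleGraph

variable {V W : Type*} {G : SimpleGraph V} {H : SimpleGraph W}

/-- In the Möbius ladder `cycleWithDiagonals n` with `4 ≤ n` these are exactly the diagonals. -/
def IsRung (G : SimpleGraph V) (i j : V) : Prop :=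
  G.Adj i j ∧ ∀ x, G.Adj i x → x ≠ j → ∃ y, G.Adj j y ∧ y ≠ i ∧ G.Adj x y

theorem Iso.isRung_map (f : G ≃g H) {i j : V} (h : G.IsRung i j) : H.IsRung (f i) (f j) := by
  refine ⟨f.map_adj_iff.2 h.1, fun x hx hxj => ?_⟩
  obtain ⟨y, hjy, hyi, hxy⟩ := h.2 (f.symm x) (by simpa using f.symm.map_adj_iff.2 hx)
    (by rintro rfl; simp at hxj)
  exact ⟨f y, f.map_adj_iff.2 hjy, f.injective.ne hyi, by simpa using f.map_adj_iff.2 hxy⟩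

theorem Iso.isRung_apply_iff (f : G ≃g H) {i j : V} : H.IsRung (f i) (f j) ↔ G.IsRung i j :=
  ⟨fun h => by simpa using f.symm.isRung_map h, f.isRung_map⟩

end SimpleGraph

namespace cycleWithDiagonals

variable {n : ℕ}

theorem adj_iff (hn : 0 < n) {i j : ZMod (2 * n)} :
    (cycleWithDiagonals n).Adj i j ↔ j - i = 1 ∨ j - i = -1 ∨ j - i = n := by
  have one_ne_zero : (1 : ZMod (2 * n)) ≠ 0 := by
    exact_mod_cast ZMod.intCast_ne_zero_of_abs_lt (k := 1) one_ne_zero (by omega) (by omega)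
  have n_ne_zero : (n : ZMod (2 * n)) ≠ 0 := by
    exact_mod_cast ZMod.intCast_ne_zero_of_abs_lt (k := n) (by omega) (by omega) (by omega)
  rw [cycleWithDiagonals, SimpleGraph.fromRel_adj, ← neg_sub j i, neg_eq_iff_eq_neg,
    neg_eq_iff_eq_neg (b := (n : ZMod (2 * n))), ZMod.neg_natCast_of_two_mul, ne_comm,
    ← sub_ne_zero]
  constructor
  · rintro ⟨-, (h | h) | (h | h)⟩ <;> simp [h]
  · rintro (h | h | h) <;> simp [h, one_ne_zero, n_ne_zero]

theorem adj_add_left_iff (a : ZMod (2 * n)) {i j : ZMod (2 * n)} :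
    (cycleWithDiagonals n).Adj (a + i) (a + j) ↔ (cycleWithDiagonals n).Adj i j := by
  simp [cycleWithDiagonals]

theorem adj_neg_iff {i j : ZMod (2 * n)} :
    (cycleWithDiagonals n).Adj (-i) (-j) ↔ (cycleWithDiagonals n).Adj i j := by
  simp only [cycleWithDiagonals, SimpleGraph.fromRel_adj, neg_sub_neg, ne_eq, neg_inj]
  tauto

theorem adj_toPerm_iff (g : DihedralGroup (2 * n)) {i j : ZMod (2 * n)} :
    (cycleWithDiagonals n).Adj (DihedralGroup.toPerm _ g i) (DihedralGroup.toPerm _ g j) ↔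
      (cycleWithDiagonals n).Adj i j := by
  rcases g with a | a
  · exact adj_add_left_iff a
  · exact (adj_add_left_iff _).trans adj_neg_iff

theorem not_isRung_of_sub_eq_one (hn : 4 ≤ n) {i j : ZMod (2 * n)} (hij : j - i = 1) :
    ¬ (cycleWithDiagonals n).IsRung i j := by
  have h2 : (2 : ZMod (2 * n)) ≠ 0 := by
    exact_mod_cast ZMod.intCast_ne_zero_of_abs_lt (k := 2) (by omega) (by omega) (by omega)
  have h4 : (4 : ZMod (2 * n)) ≠ 0 := by
    exact_mod_cast ZMod.intCast_ne_zero_of_abs_lt (k := 4) (by omega) (by omega) (by omega)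
  have hsub3 : (n : ZMod (2 * n)) - 3 ≠ 0 := by
    exact_mod_cast ZMod.intCast_ne_zero_of_abs_lt (k := n - 3) (by omega) (by omega) (by omega)
  have hadd1 : (n : ZMod (2 * n)) + 1 ≠ 0 := by
    exact_mod_cast ZMod.intCast_ne_zero_of_abs_lt (k := n + 1) (by omega) (by omega) (by omega)
  have hadd3 : (n : ZMod (2 * n)) + 3 ≠ 0 := by
    exact_mod_cast ZMod.intCast_ne_zero_of_abs_lt (k := n + 3) (by omega) (by omega) (by omega)
  rintro ⟨-, h⟩
  obtain ⟨y, hjy, hyi, hxy⟩ := h (i - 1) ((adj_iff (by omega)).2 (by right; left; ring))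
    (fun he => h2 (by linear_combination -hij - he))
  rw [adj_iff (by omega)] at hjy hxy
  rcases hjy with hy | hy | hy
  · rcases hxy with h' | h' | h'
    · exact h2 (by linear_combination h' - hy - hij)
    · exact h4 (by linear_combination h' - hy - hij)
    · exact hsub3 (by linear_combination hy + hij - h')
  · exact hyi (by linear_combination hy + hij)
  · rcases hxy with h' | h' | h'
    · exact hadd1 (by linear_combination h' - hy - hij)
    · exact hadd3 (by linear_combination h' - hy - hij)
    · exact h2 (by linear_combination h' - hy - hij)

theorem isRung_iff (hn : 4 ≤ n) {i j : ZMod (2 * n)} :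
    (cycleWithDiagonals n).IsRung i j ↔ j - i = n := by
  have hadd1 : (n : ZMod (2 * n)) + 1 ≠ 0 := by
    exact_mod_cast ZMod.intCast_ne_zero_of_abs_lt (k := n + 1) (by omega) (by omega) (by omega)
  have hsub1 : (n : ZMod (2 * n)) - 1 ≠ 0 := by
    exact_mod_cast ZMod.intCast_ne_zero_of_abs_lt (k := n - 1) (by omega) (by omega) (by omega)
  have hn0 : 0 < n := by omega
  constructor
  · intro h
    rcases (adj_iff hn0).1 h.1 with hij | hij | hij
    · exact absurd h (not_isRung_of_sub_eq_one hn hij)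
    · let reflection : cycleWithDiagonals n ≃g cycleWithDiagonals n :=
        ⟨Equiv.neg _, adj_neg_iff⟩
      exact absurd (reflection.isRung_map h)
        (not_isRung_of_sub_eq_one hn (show -j - -i = 1 by linear_combination -hij))
    · exact hij
  · -- `x - i = ±1` is completed to the square `i, x, x + n, j`
    intro hij
    simp only [SimpleGraph.IsRung, adj_iff hn0]
    refine ⟨Or.inr (Or.inr hij), fun x hix hxj => ?_⟩
    rcases hix with hx | hx | hx
    · exact ⟨x + n, Or.inl (by linear_combination hx - hij),
        fun he => hadd1 (by linear_combination he - hx), Or.inr (Or.inr (by ring))⟩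
    · exact ⟨x + n, Or.inr (Or.inl (by linear_combination hx - hij)),
        fun he => hsub1 (by linear_combination he - hx), Or.inr (Or.inr (by ring))⟩
    · exact absurd (by linear_combination hx - hij) hxj

theorem apply_add_one_sub_apply_eq_one_or_neg_one (hn : 4 ≤ n)
    (f : cycleWithDiagonals n ≃g cycleWithDiagonals n) (x : ZMod (2 * n)) :
    f (x + 1) - f x = 1 ∨ f (x + 1) - f x = -1 := by
  have hsub1 : (n : ZMod (2 * n)) - 1 ≠ 0 := by
    exact_mod_cast ZMod.intCast_ne_zero_of_abs_lt (k := n - 1) (by omega) (by omega) (by omega)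
  have hn0 : 0 < n := by omega
  have hadj : (cycleWithDiagonals n).Adj (f x) (f (x + 1)) :=
    f.map_adj_iff.2 ((adj_iff hn0).2 (Or.inl (by ring)))
  rcases (adj_iff hn0).1 hadj with h | h | h
  · exact Or.inl h
  · exact Or.inr h
  · have := (isRung_iff hn).1 (f.isRung_apply_iff.1 ((isRung_iff hn).2 h))
    exact absurd (by linear_combination -this) hsub1

theorem adj_iff_iff_mem_range_toPerm (hn : 4 ≤ n) (σ : Equiv.Perm (ZMod (2 * n))) :
    (∀ i j, (cycleWithDiagonals n).Adj (σ i) (σ j) ↔ (cycleWithDiagonals n).Adj i j) ↔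
      σ ∈ (DihedralGroup.toPerm (2 * n)).range := by
  constructor
  · intro hσ
    have step := apply_add_one_sub_apply_eq_one_or_neg_one hn ⟨σ, hσ _ _⟩
    simp only [RelIso.coe_fn_mk] at step
    have affine := ZMod.eq_add_mul_of_sub_eq_one_or_neg_one σ.injective step
    rcases step 0 with h | h <;> rw [zero_add] at h
    · exact ⟨.r (σ 0), by ext x; rw [affine x, h]; simp⟩
    · exact ⟨.sr (-σ 0), by ext x; rw [affine x, h]; simp⟩
  · rintro ⟨g, rfl⟩ i j
    exact adj_toPerm_iff g

end cycleWithDiagonals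

theorem aut_cycleWithDiagonals (n : ℕ) (hn : 4 ≤ n) :
    (∀ σ : Equiv.Perm (ZMod (2 * n)),
      (∀ i j, (cycleWithDiagonals n).Adj (σ i) (σ j) ↔ (cycleWithDiagonals n).Adj i j) ↔
        σ ∈ Subgroup.closure
          ({Equiv.addLeft 1, (Equiv.neg (ZMod (2 * n))).trans (Equiv.addLeft 1)} :
            Set (Equiv.Perm (ZMod (2 * n))))) ∧
    Nat.card (Subgroup.closure
        ({Equiv.addLeft 1, (Equiv.neg (ZMod (2 * n))).trans (Equiv.addLeft 1)} :
          Set (Equiv.Perm (ZMod (2 * n))))) = 4 * n := by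
  have two_ne_zero : (2 : ZMod (2 * n)) ≠ 0 := by
    exact_mod_cast ZMod.intCast_ne_zero_of_abs_lt (k := 2) (by omega) (by omega) (by omega)
  rw [← DihedralGroup.range_toPerm]
  refine ⟨cycleWithDiagonals.adj_iff_iff_mem_range_toPerm hn, ?_⟩
  have toPerm_injective := DihedralGroup.toPerm_injective two_ne_zero
  rw [← Nat.card_congr (MonoidHom.ofInjective toPerm_injective).toEquiv, DihedralGroup.nat_card]
  ring
end

section
/- For n ≥ 4, every 4-cycle in the graph G_n (the 2n-cycle with diagonals) contains at least two diagonal edges; consequently the set of diagonal edges {i, i+n} is invariant under every automorphism of G_n. -/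
/-- An edge `{i,j}` of `cycleWithDiagonals n` is a diagonal if `j - i = n`. -/
def IsDiagonal (n : ℕ) (i j : ZMod (2 * n)) : Prop := j - i = (n : ZMod (2 * n))

instance (n : ℕ) (i j : ZMod (2 * n)) : Decidable (IsDiagonal n i j) := by
  unfold IsDiagonal; infer_instance

namespace SimpleGraph

variable {V W : Type*} {G : SimpleGraph V} {H : SimpleGraph W}

/-- The vertices `x` such that `u v x y` is a 4-cycle for some `y`, when `u` and `v` are
adjacent. -/
def fourCycleOpposites (G : SimpleGraph V) (u v : V) : Set V :=
  {x | ∃ y, G.Adj v x ∧ G.Adj x y ∧ G.Adj y u ∧ x ≠ u ∧ y ≠ v}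

theorem Iso.image_fourCycleOpposites (e : G ≃g H) (u v : V) :
    e '' G.fourCycleOpposites u v = H.fourCycleOpposites (e u) (e v) := by
  ext x
  obtain ⟨x, rfl⟩ := e.surjective x
  simp [fourCycleOpposites, e.surjective.exists, e.map_adj_iff]

end SimpleGraph

theorem ZMod.intCast_eq_zero_iff_of_abs_lt {m : ℕ} {z : ℤ} (h : |z| < m) :
    (z : ZMod m) = 0 ↔ z = 0 :=
  ⟨fun hz => Int.eq_zero_of_abs_lt_dvd ((ZMod.intCast_zmod_eq_zero_iff_dvd z m).mp hz) h,
    by rintro rfl; exact Int.cast_zero⟩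

namespace cycleWithDiagonals

/-- The integer lifts of the differences `j - i` along edges `{i, j}`. -/
def IsStep (n : ℕ) (t : ℤ) : Prop := t = 1 ∨ t = -1 ∨ t = n

variable {n : ℕ} {i j : ZMod (2 * n)}

theorem two_le_count_of_closed_walk (hn : 4 ≤ n) {t₁ t₂ t₃ t₄ : ℤ}
    (h₁ : IsStep n t₁) (h₂ : IsStep n t₂) (h₃ : IsStep n t₃) (h₄ : IsStep n t₄)
    (hsum : ((2 * n : ℕ) : ℤ) ∣ t₁ + t₂ + t₃ + t₄) (h₁₂ : t₁ + t₂ ≠ 0) (h₂₃ : t₂ + t₃ ≠ 0) :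
    2 ≤ (if t₁ = n then 1 else 0) + (if t₂ = n then 1 else 0) + (if t₃ = n then 1 else 0)
      + (if t₄ = n then (1 : ℕ) else 0) := by
  have hclosed : t₁ + t₂ + t₃ + t₄ = 0 ∨ ((2 * n : ℕ) : ℤ) ≤ |t₁ + t₂ + t₃ + t₄| := by
    by_contra! h
    exact h.1 (Int.eq_zero_of_abs_lt_dvd hsum h.2)
  rw [le_abs'] at hclosed
  unfold IsStep at *
  split_ifs <;> omega

theorem natCast_add_self : (n : ZMod (2 * n)) + n = 0 := by
  rw [← two_mul]; exact_mod_cast ZMod.natCast_self (2 * n)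

theorem intCast_ne_zero {z : ℤ} (h₀ : 0 < z) (h : z < 2 * n) : (z : ZMod (2 * n)) ≠ 0 := by
  rw [Ne, ZMod.intCast_eq_zero_iff_of_abs_lt (by rw [abs_lt]; push_cast; omega)]
  omega

theorem adj_of_sub_eq_one (hn : 0 < n) (h : j - i = 1) : (cycleWithDiagonals n).Adj i j := by
  have h₁ : ((1 : ℤ) : ZMod (2 * n)) ≠ 0 := intCast_ne_zero one_pos (by omega)
  refine ⟨fun hij => h₁ ?_, .inl (.inl h)⟩
  rw [hij, sub_self] at h
  exact_mod_cast h.symm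

theorem adj_of_sub_eq_natCast (hn : 0 < n) (h : j - i = n) : (cycleWithDiagonals n).Adj i j := by
  have h₁ : ((n : ℤ) : ZMod (2 * n)) ≠ 0 := intCast_ne_zero (by omega) (by omega)
  refine ⟨fun hij => h₁ ?_, .inl (.inr h)⟩
  rw [hij, sub_self] at h
  exact_mod_cast h.symm

theorem exists_step_of_adj (h : (cycleWithDiagonals n).Adj i j) :
    ∃ t, IsStep n t ∧ j - i = t := by
  obtain ⟨-, (h | h) | (h | h)⟩ := h
  · exact ⟨1, .inl rfl, by rw [h, Int.cast_one]⟩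
  · exact ⟨n, .inr (.inr rfl), by rw [h, Int.cast_natCast]⟩
  · exact ⟨-1, .inr (.inl rfl), by push_cast; linear_combination -h⟩
  · exact ⟨n, .inr (.inr rfl), by push_cast; linear_combination -h - natCast_add_self⟩

theorem isDiagonal_iff (hn : 2 ≤ n) {t : ℤ} (ht : IsStep n t) (h : j - i = t) :
    IsDiagonal n i j ↔ t = n := by
  rw [IsDiagonal, h]
  calc (t : ZMod (2 * n)) = n ↔ ((t - n : ℤ) : ZMod (2 * n)) = 0 := by
        push_cast; exact sub_eq_zero.symm
    _ ↔ t - n = 0 :=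
        ZMod.intCast_eq_zero_iff_of_abs_lt (by unfold IsStep at ht; rw [abs_lt]; push_cast; omega)
    _ ↔ t = n := sub_eq_zero

theorem two_le_card_diagonals (hn : 4 ≤ n) {a b c d : ZMod (2 * n)} (hac : a ≠ c) (hbd : b ≠ d)
    (hab : (cycleWithDiagonals n).Adj a b) (hbc : (cycleWithDiagonals n).Adj b c)
    (hcd : (cycleWithDiagonals n).Adj c d) (hda : (cycleWithDiagonals n).Adj d a) :
    2 ≤ (if IsDiagonal n a b then 1 else 0) + (if IsDiagonal n b c then 1 else 0)
      + (if IsDiagonal n c d then 1 else 0) + (if IsDiagonal n d a then (1 : ℕ) else 0) := by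
  obtain ⟨t₁, h₁, e₁⟩ := exists_step_of_adj hab
  obtain ⟨t₂, h₂, e₂⟩ := exists_step_of_adj hbc
  obtain ⟨t₃, h₃, e₃⟩ := exists_step_of_adj hcd
  obtain ⟨t₄, h₄, e₄⟩ := exists_step_of_adj hda
  simp only [isDiagonal_iff (by omega) h₁ e₁, isDiagonal_iff (by omega) h₂ e₂,
    isDiagonal_iff (by omega) h₃ e₃, isDiagonal_iff (by omega) h₄ e₄]
  refine two_le_count_of_closed_walk hn h₁ h₂ h₃ h₄ ?_ (fun h => hac ?_) (fun h => hbd ?_)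
  · rw [← ZMod.intCast_zmod_eq_zero_iff_dvd]
    push_cast
    linear_combination -e₁ - e₂ - e₃ - e₄
  · have h := congrArg (Int.cast : ℤ → ZMod (2 * n)) h
    push_cast at h
    linear_combination -e₁ - e₂ - h
  · have h := congrArg (Int.cast : ℤ → ZMod (2 * n)) h
    push_cast at h
    linear_combination -e₂ - e₃ - h

theorem eq_add_natCast_of_mem_fourCycleOpposites (hn : 4 ≤ n)
    (hij : (cycleWithDiagonals n).Adj i j) (hd : ¬IsDiagonal n i j) {x : ZMod (2 * n)}
    (hx : x ∈ (cycleWithDiagonals n).fourCycleOpposites i j) : x = j + n := by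
  obtain ⟨y, hjx, hxy, hyi, hxi, hyj⟩ := hx
  have hcount := two_le_card_diagonals hn hxi.symm hyj.symm hij hjx hxy hyi
  by_contra hx
  have hd' : ¬IsDiagonal n j x := fun h => hx (by rw [IsDiagonal] at h; linear_combination h)
  rw [if_neg hd, if_neg hd'] at hcount
  split_ifs at hcount with hxy' hyi'
  · exact hxi (by rw [IsDiagonal] at hxy' hyi'; linear_combination -hxy' - hyi' - natCast_add_self)
  all_goals simp at hcount

theorem isDiagonal_iff_nontrivial_fourCycleOpposites (hn : 4 ≤ n)
    (hij : (cycleWithDiagonals n).Adj i j) :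
    IsDiagonal n i j ↔ ((cycleWithDiagonals n).fourCycleOpposites i j).Nontrivial := by
  refine ⟨fun hd => ?_, fun hnt => by_contra fun hd => ?_⟩
  · obtain rfl : j = i + n := by rw [IsDiagonal] at hd; linear_combination hd
    have h₂ : ((2 : ℤ) : ZMod (2 * n)) ≠ 0 := intCast_ne_zero (by omega) (by omega)
    have hp : ((n + 1 : ℤ) : ZMod (2 * n)) ≠ 0 := intCast_ne_zero (by omega) (by omega)
    have hm : ((n - 1 : ℤ) : ZMod (2 * n)) ≠ 0 := intCast_ne_zero (by omega) (by omega)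
    push_cast at h₂ hp hm
    have hn₀ : 0 < n := by omega
    refine ⟨i + n + 1, ⟨i + 1, adj_of_sub_eq_one hn₀ (by ring),
        (adj_of_sub_eq_natCast hn₀ (by ring)).symm, (adj_of_sub_eq_one hn₀ (by ring)).symm,
        fun h => hp (by linear_combination h), fun h => hm (by linear_combination -h)⟩,
      i + n - 1, ⟨i - 1, (adj_of_sub_eq_one hn₀ (by ring)).symm,
        (adj_of_sub_eq_natCast hn₀ (by ring)).symm, adj_of_sub_eq_one hn₀ (by ring),
        fun h => hm (by linear_combination h), fun h => hp (by linear_combination -h)⟩,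
      fun h => h₂ (by linear_combination h)⟩
  · exact hnt.not_subsingleton fun x hx y hy =>
      (eq_add_natCast_of_mem_fourCycleOpposites hn hij hd hx).trans
        (eq_add_natCast_of_mem_fourCycleOpposites hn hij hd hy).symm

end cycleWithDiagonals

theorem four_cycles_have_two_diagonals (n : ℕ) (hn : 4 ≤ n) :
    (∀ a b c d : ZMod (2 * n),
      a ≠ b → a ≠ c → a ≠ d → b ≠ c → b ≠ d → c ≠ d →
      (cycleWithDiagonals n).Adj a b → (cycleWithDiagonals n).Adj b c →
      (cycleWithDiagonals n).Adj c d → (cycleWithDiagonals n).Adj d a →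
      2 ≤ (if IsDiagonal n a b then 1 else 0) + (if IsDiagonal n b c then 1 else 0)
        + (if IsDiagonal n c d then 1 else 0) + (if IsDiagonal n d a then (1 : ℕ) else 0)) ∧
    (∀ σ : Equiv.Perm (ZMod (2 * n)),
      (∀ i j, (cycleWithDiagonals n).Adj (σ i) (σ j) ↔ (cycleWithDiagonals n).Adj i j) →
      ∀ i j, (cycleWithDiagonals n).Adj i j → (IsDiagonal n i j ↔ IsDiagonal n (σ i) (σ j))) := by
  refine ⟨fun a b c d _ hac _ _ hbd _ => cycleWithDiagonals.two_le_card_diagonals hn hac hbd,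
    fun σ hσ i j hij => ?_⟩
  let e : cycleWithDiagonals n ≃g cycleWithDiagonals n := ⟨σ, hσ _ _⟩
  rw [cycleWithDiagonals.isDiagonal_iff_nontrivial_fourCycleOpposites hn hij,
    cycleWithDiagonals.isDiagonal_iff_nontrivial_fourCycleOpposites hn ((hσ i j).mpr hij)]
  change _ ↔ (SimpleGraph.fourCycleOpposites _ (e i) (e j)).Nontrivial
  rw [← e.image_fourCycleOpposites, Set.image_nontrivial e.injective]
end

section
/- Let Γ = Γ₁ × Γ₂ × Γ₃ be a finite group and Δ ≤ Γ a subdirect product (each coordinate projection is surjective) that is 2-factor injective (each projection onto two of the factors is injective) and 2-factor surjective (each projection onto two factors is surjective). Then Γ₁, Γ₂, Γ₃ are pairwise isomorphic abelian groups, and Δ is isomorphic to the subgroup {(a,b,c) ∈ Γ₁³ : abc = 1}, which in turn is isomorphic to Γ₁² as an abstract group. -/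
/-!
If `π₁ × π₂ : Δ → Γ₁ × Γ₂` is bijective, then `π₂` maps `ker π₁` isomorphically onto `Γ₂`.
Applied to the three bijective pair projections, `ker π₁` is isomorphic to both `Γ₂` and `Γ₃`,
and `ker π₂` to both `Γ₁` and `Γ₃`. The kernels `ker π₁` and `ker π₂` commute elementwise, since
their commutators lie in `ker π₁ ∩ ker π₂ = 1`, and both map onto `Γ₃`; so `Γ₃` is abelian.
-/

namespace MonoidHom

variable {D G H K : Type*} [Group D] [Group G] [Group H] [Group K]
  (p : D →* G) (q : D →* H) (r : D →* K)

theorem bijective_prod_swap (hpq : Function.Bijective (p.prod q)) :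
    Function.Bijective (q.prod p) :=
  Prod.swap_bijective.comp hpq

theorem injective_domRestrict_ker_of_injective_prod (hpq : Function.Injective (p.prod q)) :
    Function.Injective (q.domRestrict p.ker) := fun x y hxy =>
  Subtype.ext <| hpq <| Prod.ext (x.2.trans y.2.symm) hxy

theorem surjective_domRestrict_ker_of_surjective_prod (hpq : Function.Surjective (p.prod q)) :
    Function.Surjective (q.domRestrict p.ker) := fun h => by
  obtain ⟨d, hd⟩ := hpq (1, h)
  exact ⟨⟨d, congrArg Prod.fst hd⟩, congrArg Prod.snd hd⟩

noncomputable def kerMulEquivOfBijectiveProd (hpq : Function.Bijective (p.prod q)) :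
    p.ker ≃* H :=
  MulEquiv.ofBijective (q.domRestrict p.ker)
    ⟨injective_domRestrict_ker_of_injective_prod p q hpq.1,
      surjective_domRestrict_ker_of_surjective_prod p q hpq.2⟩

theorem commute_of_mem_ker_of_injective_prod (hpq : Function.Injective (p.prod q))
    {x y : D} (hx : x ∈ p.ker) (hy : y ∈ q.ker) : Commute x y := by
  rw [mem_ker] at hx hy
  exact hpq <| Prod.ext (by simp [hx, hy]) (by simp [hx, hy])

theorem commute_of_surjective_domRestrict {A B : Subgroup D}
    (hAB : ∀ x ∈ A, ∀ y ∈ B, Commute x y)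
    (hA : Function.Surjective (r.domRestrict A)) (hB : Function.Surjective (r.domRestrict B))
    (a b : K) : Commute a b := by
  obtain ⟨⟨x, hx⟩, rfl⟩ := hA a
  obtain ⟨⟨y, hy⟩, rfl⟩ := hB b
  exact (hAB x hx y hy).map r

theorem commute_of_injective_prod_of_surjective_prod (hpq : Function.Injective (p.prod q))
    (hpr : Function.Surjective (p.prod r)) (hqr : Function.Surjective (q.prod r))
    (a b : K) : Commute a b :=
  commute_of_surjective_domRestrict r
    (fun _ hx _ hy => commute_of_mem_ker_of_injective_prod p q hpq hx hy)
    (surjective_domRestrict_ker_of_surjective_prod p r hpr)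
    (surjective_domRestrict_ker_of_surjective_prod q r hqr) a b

end MonoidHom

def prodEquivMulEqOne (G : Type*) [Group G] :
    G × G ≃ {x : G × G × G // x.1 * x.2.1 * x.2.2 = 1} where
  toFun x := ⟨(x.1, x.2, (x.1 * x.2)⁻¹), mul_inv_cancel _⟩
  invFun x := (x.1.1, x.1.2.1)
  left_inv _ := rfl
  right_inv x := Subtype.ext <| Prod.ext rfl <| Prod.ext rfl (inv_eq_of_mul_eq_one_right x.2)

theorem coe_prodEquivMulEqOne_mul {G : Type*} [Group G] (hG : ∀ a b : G, Commute a b)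
    (x y : G × G) :
    (prodEquivMulEqOne G (x * y) : G × G × G) =
      prodEquivMulEqOne G x * prodEquivMulEqOne G y := by
  refine Prod.ext rfl (Prod.ext rfl ?_)
  change (x.1 * y.1 * (x.2 * y.2))⁻¹ = (x.1 * x.2)⁻¹ * (y.1 * y.2)⁻¹
  rw [← mul_inv_rev, (hG y.1 x.2).mul_mul_mul_comm, (hG (x.1 * x.2) _).eq]

theorem two_factor_inj_surj_subdirect_product_classification_general
    {Γ₁ Γ₂ Γ₃ : Type*} [Group Γ₁] [Group Γ₂] [Group Γ₃]
    (Δ : Subgroup (Γ₁ × Γ₂ × Γ₃))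
    -- 2-factor injective
    (hi12 : Function.Injective fun d : Δ => ((d : Γ₁ × Γ₂ × Γ₃).1, (d : Γ₁ × Γ₂ × Γ₃).2.1))
    (hi13 : Function.Injective fun d : Δ => ((d : Γ₁ × Γ₂ × Γ₃).1, (d : Γ₁ × Γ₂ × Γ₃).2.2))
    (hi23 : Function.Injective fun d : Δ => ((d : Γ₁ × Γ₂ × Γ₃).2.1, (d : Γ₁ × Γ₂ × Γ₃).2.2))
    -- 2-factor surjective
    (hs12 : Function.Surjective fun d : Δ => ((d : Γ₁ × Γ₂ × Γ₃).1, (d : Γ₁ × Γ₂ × Γ₃).2.1))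
    (hs13 : Function.Surjective fun d : Δ => ((d : Γ₁ × Γ₂ × Γ₃).1, (d : Γ₁ × Γ₂ × Γ₃).2.2))
    (hs23 : Function.Surjective fun d : Δ => ((d : Γ₁ × Γ₂ × Γ₃).2.1, (d : Γ₁ × Γ₂ × Γ₃).2.2)) :
    -- Γ₁, Γ₂, Γ₃ are isomorphic abelian groups
    (∀ a b : Γ₁, a * b = b * a) ∧ (∀ a b : Γ₂, a * b = b * a) ∧ (∀ a b : Γ₃, a * b = b * a) ∧
    Nonempty (Γ₁ ≃* Γ₂) ∧ Nonempty (Γ₁ ≃* Γ₃) ∧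
    -- Δ is isomorphic (as a group) to {(a,b,c) ∈ Γ₁³ : a·b·c = 1}
    (∃ e : Δ ≃ {p : Γ₁ × Γ₁ × Γ₁ // p.1 * p.2.1 * p.2.2 = 1},
      ∀ x y : Δ, (e (x * y) : Γ₁ × Γ₁ × Γ₁) = (e x : Γ₁ × Γ₁ × Γ₁) * (e y : Γ₁ × Γ₁ × Γ₁)) ∧
    -- which in turn is isomorphic to Γ₁² as an abstract group
    Nonempty (Δ ≃* Γ₁ × Γ₁) := by
  let p₁ : Δ →* Γ₁ := (MonoidHom.fst _ _).comp Δ.subtype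
  let p₂ : Δ →* Γ₂ := (MonoidHom.fst _ _).comp ((MonoidHom.snd _ _).comp Δ.subtype)
  let p₃ : Δ →* Γ₃ := (MonoidHom.snd _ _).comp ((MonoidHom.snd _ _).comp Δ.subtype)
  have h12 : Function.Bijective (p₁.prod p₂) := ⟨hi12, hs12⟩
  have h13 : Function.Bijective (p₁.prod p₃) := ⟨hi13, hs13⟩
  have h23 : Function.Bijective (p₂.prod p₃) := ⟨hi23, hs23⟩
  have comm₃ : ∀ a b : Γ₃, Commute a b :=
    MonoidHom.commute_of_injective_prod_of_surjective_prod p₁ p₂ p₃ hi12 hs13 hs23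
  let e₁ : Γ₁ ≃* Γ₃ := (p₂.kerMulEquivOfBijectiveProd p₁ (p₁.bijective_prod_swap p₂ h12)).symm.trans
    (p₂.kerMulEquivOfBijectiveProd p₃ h23)
  let e₂ : Γ₂ ≃* Γ₃ := (p₁.kerMulEquivOfBijectiveProd p₂ h12).symm.trans
    (p₁.kerMulEquivOfBijectiveProd p₃ h13)
  have comm₁ (a b : Γ₁) : Commute a b := by simpa using (comm₃ (e₁ a) (e₁ b)).map e₁.symm
  have comm₂ (a b : Γ₂) : Commute a b := by simpa using (comm₃ (e₂ a) (e₂ b)).map e₂.symm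
  let eΔ : Δ ≃* Γ₁ × Γ₁ := (MulEquiv.ofBijective _ h12).trans
    (MulEquiv.prodCongr (MulEquiv.refl _) (e₂.trans e₁.symm))
  refine ⟨comm₁, comm₂, comm₃, ⟨e₁.trans e₂.symm⟩, ⟨e₁⟩,
    ⟨eΔ.toEquiv.trans (prodEquivMulEqOne Γ₁), fun x y => ?_⟩, ⟨eΔ⟩⟩
  simpa using coe_prodEquivMulEqOne_mul comm₁ (eΔ x) (eΔ y)

theorem two_factor_inj_surj_subdirect_product_classification
    {Γ₁ Γ₂ Γ₃ : Type*} [Group Γ₁] [Group Γ₂] [Group Γ₃]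
    [Finite Γ₁] [Finite Γ₂] [Finite Γ₃]
    (Δ : Subgroup (Γ₁ × Γ₂ × Γ₃))
    -- subdirect product: the coordinate projections are surjective
    (h1 : Function.Surjective fun d : Δ => (d : Γ₁ × Γ₂ × Γ₃).1)
    (h2 : Function.Surjective fun d : Δ => (d : Γ₁ × Γ₂ × Γ₃).2.1)
    (h3 : Function.Surjective fun d : Δ => (d : Γ₁ × Γ₂ × Γ₃).2.2)
    -- 2-factor injective
    (hi12 : Function.Injective fun d : Δ => ((d : Γ₁ × Γ₂ × Γ₃).1, (d : Γ₁ × Γ₂ × Γ₃).2.1))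
    (hi13 : Function.Injective fun d : Δ => ((d : Γ₁ × Γ₂ × Γ₃).1, (d : Γ₁ × Γ₂ × Γ₃).2.2))
    (hi23 : Function.Injective fun d : Δ => ((d : Γ₁ × Γ₂ × Γ₃).2.1, (d : Γ₁ × Γ₂ × Γ₃).2.2))
    -- 2-factor surjective
    (hs12 : Function.Surjective fun d : Δ => ((d : Γ₁ × Γ₂ × Γ₃).1, (d : Γ₁ × Γ₂ × Γ₃).2.1))
    (hs13 : Function.Surjective fun d : Δ => ((d : Γ₁ × Γ₂ × Γ₃).1, (d : Γ₁ × Γ₂ × Γ₃).2.2))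
    (hs23 : Function.Surjective fun d : Δ => ((d : Γ₁ × Γ₂ × Γ₃).2.1, (d : Γ₁ × Γ₂ × Γ₃).2.2)) :
    -- Γ₁, Γ₂, Γ₃ are isomorphic abelian groups
    (∀ a b : Γ₁, a * b = b * a) ∧ (∀ a b : Γ₂, a * b = b * a) ∧ (∀ a b : Γ₃, a * b = b * a) ∧
    Nonempty (Γ₁ ≃* Γ₂) ∧ Nonempty (Γ₁ ≃* Γ₃) ∧
    -- Δ is isomorphic (as a group) to {(a,b,c) ∈ Γ₁³ : a·b·c = 1}
    (∃ e : Δ ≃ {p : Γ₁ × Γ₁ × Γ₁ // p.1 * p.2.1 * p.2.2 = 1},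
      ∀ x y : Δ, (e (x * y) : Γ₁ × Γ₁ × Γ₁) = (e x : Γ₁ × Γ₁ × Γ₁) * (e y : Γ₁ × Γ₁ × Γ₁)) ∧
    -- which in turn is isomorphic to Γ₁² as an abstract group
    Nonempty (Δ ≃* Γ₁ × Γ₁) :=
  two_factor_inj_surj_subdirect_product_classification_general Δ hi12 hi13 hi23 hs12 hs13 hs23
end

section
/- Let G = (V, W, E) be a bipartite graph satisfying: (1) every v ∈ V has degree 3; (2) G is odd; (3) G is rigid (its only automorphism is the identity); (4) no two distinct w₁, w₂ ∈ W have equal second neighborhoods N²_G(w₁) = N²_G(w₂). Then the multipede graph R(G), obtained by replacing each w ∈ W with a pair {a(w), b(w)} and each v ∈ V with a CFI gadget X₃ attached to the pairs of its three neighbors, is rigid. -/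
/-- The bipartite graph on `V ⊕ W` associated with a bipartite adjacency
relation `E : V → W → Prop`. -/
def bipartiteGraph {V W : Type*} (E : V → W → Prop) : SimpleGraph (V ⊕ W) :=
  SimpleGraph.fromRel (fun x y =>
    match x, y with
    | Sum.inl v, Sum.inr w => E v w
    | _, _ => False)

/-- The second neighborhood of a vertex: all vertices `u ≠ x` having a common
neighbor with `x`. -/
def secondNbhd {α : Type*} (G : SimpleGraph α) (x : α) : Set α :=
  {u | u ≠ x ∧ ∃ y, G.Adj x y ∧ G.Adj y u}

/-- The multipede graph `R(G)`.  Every `w ∈ W` is replaced by the pair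
`(w, false) = a(w)`, `(w, true) = b(w)`; every `v ∈ V` is replaced by a CFI gadget
whose inner vertices `m_i(v)` are indexed by even-weight vectors `i ∈ {0,1}³`, with
`m_i(v)` adjacent to `a(w_j)` if `i_j = 0` and to `b(w_j)` if `i_j = 1`, where
`w_1, w_2, w_3 = nb v 0, nb v 1, nb v 2` are the three neighbors of `v`. -/
def multipede {V W : Type*} (nb : V → Fin 3 → W) :
    SimpleGraph ((V × {i : Fin 3 → Bool // Even (Finset.univ.filter (fun j => i j = true)).card})
      ⊕ (W × Bool)) :=
  SimpleGraph.fromRel (fun x y =>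
    match x, y with
    | Sum.inl (v, i), Sum.inr (w, b) => ∃ j : Fin 3, nb v j = w ∧ i.val j = b
    | _, _ => False)

/-!
An automorphism `φ` of `R(G)` preserves degree parity, so it maps outer vertices (even degree)
to outer vertices and inner vertices (degree 3) to inner vertices. The second neighbourhood of
`a(w)` and of `b(w)` in `R(G)` consists of the pairs over `N²_G(w)`; as these sets separate the
vertices of `W`, `φ` maps pairs to pairs. The neighbourhood of an inner vertex of the gadget of
`v` lies over `N_G(v)`, and a rigid graph has no two vertices with equal neighbourhoods, so `φ`
also maps gadgets to gadgets. Hence `φ` descends to an automorphism of `G`, which is trivial.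
What remains of `φ` is a set `X ⊆ W` of swapped pairs; the image of an inner vertex of the gadget
of `v` must again have even weight, so `|X ∩ N(v)|` is even for every `v`, and oddness of `G`
forces `X = ∅`.
-/

open Function

namespace SimpleGraph

variable {α β : Type*} {G : SimpleGraph α} {H : SimpleGraph β}

theorem subsingleton_iso_iff_forall_perm :
    Subsingleton (G ≃g G) ↔
      ∀ σ : Equiv.Perm α, (∀ x y, G.Adj (σ x) (σ y) ↔ G.Adj x y) → σ = 1 := by
  refine ⟨fun _ σ hσ => ?_, fun h => ⟨fun φ ψ => RelIso.toEquiv_injective ?_⟩⟩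
  · exact congrArg RelIso.toEquiv (Subsingleton.elim (⟨σ, hσ _ _⟩ : G ≃g G) (Iso.refl))
  · exact (h φ.toEquiv fun _ _ => φ.map_adj_iff).trans
      (h ψ.toEquiv fun _ _ => ψ.map_adj_iff).symm

theorem eq_of_neighborSet_eq [Subsingleton (G ≃g G)] {x y : α}
    (h : G.neighborSet x = G.neighborSet y) : x = y := by
  classical
  have hxy : ∀ z, G.Adj x z ↔ G.Adj y z := fun z => Set.ext_iff.1 h z
  let τ : G ≃g G := ⟨Equiv.swap x y, fun {a b} => by
    simp only [Equiv.swap_apply_def]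
    split_ifs <;> subst_vars <;> grind [G.adj_comm, G.loopless]⟩
  simpa [τ] using (congrArg (· x) (Subsingleton.elim τ .refl)).symm

theorem Iso.ncard_neighborSet (φ : G ≃g H) (x : α) :
    (H.neighborSet (φ x)).ncard = (G.neighborSet x).ncard := by
  rw [← φ.image_neighborSet, Set.ncard_image_of_injective _ φ.injective]

theorem Iso.secondNbhd_apply (φ : G ≃g H) (x : α) :
    secondNbhd H (φ x) = φ '' secondNbhd G x := by
  ext u
  obtain ⟨u, rfl⟩ := φ.surjective u
  simp [secondNbhd, φ.injective.mem_set_image, φ.surjective.exists, φ.map_adj_iff]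

theorem Iso.exists_semiconj_of_adj_iff (φ : G ≃g G) {p : α → β} (hp : Surjective p)
    (hH : ∀ a b, H.Adj a b ↔ ∃ x y, p x = a ∧ p y = b ∧ G.Adj x y)
    (hφ : ∀ x y, p (φ x) = p (φ y) ↔ p x = p y) :
    ∃ ψ : H ≃g H, Semiconj p φ ψ := by
  classical
  have hfac : FactorsThrough (p ∘ φ) p := fun x y h => (hφ x y).2 h
  have hfac' : FactorsThrough (p ∘ φ.symm) p := fun x y h =>
    (hφ (φ.symm x) (φ.symm y)).1 (by simpa using h)
  have hψ := hfac.extend_apply id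
  have hψ' := hfac'.extend_apply id
  refine ⟨⟨⟨extend p (p ∘ φ) id, extend p (p ∘ φ.symm) id, fun b => ?_, fun b => ?_⟩, ?_⟩,
    fun x => (hψ x).symm⟩
  · obtain ⟨x, rfl⟩ := hp b; simp [hψ, hψ']
  · obtain ⟨x, rfl⟩ := hp b; simp [hψ, hψ']
  intro a b
  obtain ⟨x, rfl⟩ := hp a
  obtain ⟨y, rfl⟩ := hp b
  simp only [Equiv.coe_fn_mk, hψ, comp_apply, hH]
  constructor
  · rintro ⟨x', y', hx, hy, hxy⟩
    refine ⟨φ.symm x', φ.symm y', ?_, ?_, φ.symm.map_adj_iff.2 hxy⟩ <;>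
      rw [← hφ] <;> simpa
  · rintro ⟨x', y', hx, hy, hxy⟩
    exact ⟨φ x', φ y', (hφ _ _).2 hx, (hφ _ _).2 hy, φ.map_adj_iff.2 hxy⟩

end SimpleGraph

abbrev EvenWeightVec := {i : Fin 3 → Bool // Even (Finset.univ.filter (fun j => i j = true)).card}

instance : Nonempty EvenWeightVec := ⟨⟨fun _ => false, by decide⟩⟩

namespace EvenWeightVec

theorem exists_apply_eq_apply_eq {j j' : Fin 3} (hj : j ≠ j') (b c : Bool) :
    ∃ i : EvenWeightVec, i.1 j = b ∧ i.1 j' = c := by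
  revert j j' b c; decide

theorem card_filter_apply_eq (j : Fin 3) (b : Bool) :
    (Finset.univ.filter fun i : EvenWeightVec => i.1 j = b).card = 2 := by
  revert j b; decide

end EvenWeightVec

namespace Multipede

open SimpleGraph Sum

variable {V W : Type*} (nb : V → Fin 3 → W)

abbrev baseGraph : SimpleGraph (V ⊕ W) := bipartiteGraph fun v w => ∃ j, nb v j = w

def proj : (V × EvenWeightVec) ⊕ (W × Bool) → V ⊕ W := Sum.map Prod.fst Prod.fst

variable {nb}

@[simp] theorem proj_inl (p : V × EvenWeightVec) :
    proj (inl p : (V × EvenWeightVec) ⊕ (W × Bool)) = inl p.1 := rfl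
@[simp] theorem proj_inr (q : W × Bool) :
    proj (inr q : (V × EvenWeightVec) ⊕ (W × Bool)) = inr q.1 := rfl

theorem proj_surjective : Surjective (proj : (V × EvenWeightVec) ⊕ (W × Bool) → V ⊕ W) :=
  Sum.map_surjective.2 ⟨Prod.fst_surjective, Prod.fst_surjective⟩

@[simp] theorem adj_inl_inr {v : V} {i : EvenWeightVec} {w : W} {b : Bool} :
    (multipede nb).Adj (inl (v, i)) (inr (w, b)) ↔ ∃ j, nb v j = w ∧ i.1 j = b := by
  simp [multipede]

@[simp] theorem adj_inr_inl {v : V} {i : EvenWeightVec} {w : W} {b : Bool} :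
    (multipede nb).Adj (inr (w, b)) (inl (v, i)) ↔ ∃ j, nb v j = w ∧ i.1 j = b := by
  simp [multipede]

@[simp] theorem not_adj_inl_inl {p p' : V × EvenWeightVec} :
    ¬ (multipede nb).Adj (inl p) (inl p') := by
  simp [multipede]

@[simp] theorem not_adj_inr_inr {q q' : W × Bool} : ¬ (multipede nb).Adj (inr q) (inr q') := by
  simp [multipede]

@[simp] theorem baseGraph_adj_inl_inr {v : V} {w : W} :
    (baseGraph nb).Adj (inl v) (inr w) ↔ ∃ j, nb v j = w := by
  simp [bipartiteGraph]

@[simp] theorem baseGraph_adj_inr_inl {v : V} {w : W} :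
    (baseGraph nb).Adj (inr w) (inl v) ↔ ∃ j, nb v j = w := by
  simp [bipartiteGraph]

@[simp] theorem not_baseGraph_adj_inl_inl {v v' : V} : ¬ (baseGraph nb).Adj (inl v) (inl v') := by
  simp [bipartiteGraph]

@[simp] theorem not_baseGraph_adj_inr_inr {w w' : W} : ¬ (baseGraph nb).Adj (inr w) (inr w') := by
  simp [bipartiteGraph]

theorem baseGraph_adj_iff {a b : V ⊕ W} :
    (baseGraph nb).Adj a b ↔ ∃ x y, proj x = a ∧ proj y = b ∧ (multipede nb).Adj x y := by
  constructor
  · intro h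
    obtain ⟨i⟩ : Nonempty EvenWeightVec := inferInstance
    rcases a with v | w <;> rcases b with v' | w' <;> simp only [baseGraph_adj_inl_inr,
      baseGraph_adj_inr_inl, not_baseGraph_adj_inl_inl, not_baseGraph_adj_inr_inr] at h
    · obtain ⟨j, rfl⟩ := h
      exact ⟨inl (v, i), inr (nb v j, i.1 j), rfl, rfl, adj_inl_inr.2 ⟨j, rfl, rfl⟩⟩
    · obtain ⟨j, rfl⟩ := h
      exact ⟨inr (nb v' j, i.1 j), inl (v', i), rfl, rfl, adj_inr_inl.2 ⟨j, rfl, rfl⟩⟩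
  · rintro ⟨⟨v, i⟩ | ⟨w, b⟩, ⟨v', i'⟩ | ⟨w', b'⟩, rfl, rfl, h⟩ <;> simp at h
    · obtain ⟨j, hj, -⟩ := h
      exact baseGraph_adj_inl_inr.2 ⟨j, hj⟩
    · obtain ⟨j, hj, -⟩ := h
      exact baseGraph_adj_inr_inl.2 ⟨j, hj⟩

theorem proj_eq_inl_iff {z : (V × EvenWeightVec) ⊕ (W × Bool)} {v : V} :
    proj z = inl v ↔ ∃ i, z = inl (v, i) := by
  rcases z with ⟨v', i⟩ | q <;> simp [eq_comm]

theorem proj_eq_inr_iff {z : (V × EvenWeightVec) ⊕ (W × Bool)} {w : W} :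
    proj z = inr w ↔ ∃ b, z = inr (w, b) := by
  rcases z with p | ⟨w', b⟩ <;> simp [eq_comm]

theorem neighborSet_inl (v : V) (i : EvenWeightVec) :
    (multipede nb).neighborSet (inl (v, i)) = Set.range fun j => inr (nb v j, i.1 j) := by
  ext (p | ⟨w, b⟩) <;> simp

theorem image_proj_neighborSet_inl (p : V × EvenWeightVec) :
    proj '' (multipede nb).neighborSet (inl p) = (baseGraph nb).neighborSet (inl p.1) := by
  rw [neighborSet_inl, ← Set.range_comp]
  ext (v | w) <;> simp

theorem ncard_neighborSet_inl (hnb : ∀ v, Injective (nb v)) (p : V × EvenWeightVec) :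
    ((multipede nb).neighborSet (inl p)).ncard = 3 := by
  obtain ⟨v, i⟩ := p
  rw [neighborSet_inl, Set.ncard_range_of_injective, Nat.card_eq_fintype_card, Fintype.card_fin]
  exact fun j j' h => hnb v (congrArg Prod.fst (inr_injective h))

theorem even_ncard_neighborSet_inr [Fintype V] (hnb : ∀ v, Injective (nb v)) (q : W × Bool) :
    Even ((multipede nb).neighborSet (inr q)).ncard := by
  classical
  obtain ⟨w, b⟩ := q
  have hN : (multipede nb).neighborSet (inr (w, b)) =
      inl '' ↑(Finset.univ.filter fun p : V × EvenWeightVec =>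
        ∃ j, nb p.1 j = w ∧ p.2.1 j = b) := by
    ext (⟨v, i⟩ | q) <;> simp
  rw [hN, Set.ncard_image_of_injective _ inl_injective, Set.ncard_coe_finset, Finset.card_filter,
    Fintype.sum_prod_type]
  refine Finset.even_sum _ fun v _ => ?_
  rw [← Finset.card_filter]
  by_cases hw : ∃ j, nb v j = w
  · obtain ⟨j, rfl⟩ := hw
    simp only [(hnb v).eq_iff, exists_eq_left, EvenWeightVec.card_filter_apply_eq, even_two]
  · simp_all

theorem odd_ncard_neighborSet_iff [Fintype V] (hnb : ∀ v, Injective (nb v))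
    (x : (V × EvenWeightVec) ⊕ (W × Bool)) :
    Odd ((multipede nb).neighborSet x).ncard ↔ x.isLeft := by
  rcases x with p | q
  · simp only [ncard_neighborSet_inl hnb, isLeft_inl, iff_true]
    decide
  · simpa using even_ncard_neighborSet_inr hnb q

theorem secondNbhd_inr (hnb : ∀ v, Injective (nb v)) (q : W × Bool) :
    secondNbhd (multipede nb) (inr q) = proj ⁻¹' secondNbhd (baseGraph nb) (inr q.1) := by
  obtain ⟨w, b⟩ := q
  ext (⟨v, i⟩ | ⟨w₂, c⟩)
  · simp [secondNbhd, Sum.exists]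
  · simp only [secondNbhd, Set.mem_ofPred_eq, Set.mem_preimage, proj_inr, Sum.exists, Prod.exists,
      ne_eq, inr.injEq, Prod.mk.injEq, adj_inr_inl, adj_inl_inr, not_adj_inr_inr,
      baseGraph_adj_inr_inl, baseGraph_adj_inl_inr, not_baseGraph_adj_inr_inr, false_and,
      exists_false, or_false]
    constructor
    · rintro ⟨hne, v, i, ⟨j, rfl, rfl⟩, j', rfl, rfl⟩
      exact ⟨fun h => hne ⟨h, by rw [hnb v h]⟩, v, ⟨j, rfl⟩, j', rfl⟩
    · rintro ⟨hne, v, ⟨j, rfl⟩, j', rfl⟩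
      have hj : j ≠ j' := by rintro rfl; exact hne rfl
      obtain ⟨i, hi, hi'⟩ := EvenWeightVec.exists_apply_eq_apply_eq hj b c
      exact ⟨fun h => hne h.1, v, i, ⟨j, rfl, hi⟩, j', rfl, hi'⟩

theorem eq_false_of_even_card_filter [Fintype W] [DecidableEq W] (hnb : ∀ v, Injective (nb v))
    (hodd : ∀ X : Finset W, X.Nonempty → ∃ v, Odd (X.filter fun w => ∃ j, nb v j = w).card)
    (t : W → Bool) (ht : ∀ v, Even (Finset.univ.filter fun j => t (nb v j) = true).card)
    (w : W) :
    t w = false := by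
  by_contra hw
  obtain ⟨v, hv⟩ := hodd (Finset.univ.filter fun w => t w = true) ⟨w, by simpa using hw⟩
  have hrow : (Finset.univ.filter fun w => t w = true).filter (fun w => ∃ j, nb v j = w) =
      (Finset.univ.filter fun j => t (nb v j) = true).map ⟨nb v, hnb v⟩ := by
    ext
    simp only [Finset.mem_filter, Finset.mem_univ, true_and, Finset.mem_map, Embedding.coeFn_mk]
    constructor
    · rintro ⟨htw, j, rfl⟩
      exact ⟨j, htw, rfl⟩
    · rintro ⟨j, htw, rfl⟩
      exact ⟨htw, j, rfl⟩
  rw [hrow, Finset.card_map] at hv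
  exact Nat.not_even_iff_odd.2 hv (ht v)

theorem eq_refl_of_proj_apply [Fintype W] [DecidableEq W] (hnb : ∀ v, Injective (nb v))
    (φ : multipede nb ≃g multipede nb)
    (hodd : ∀ X : Finset W, X.Nonempty → ∃ v, Odd (X.filter fun w => ∃ j, nb v j = w).card)
    (h : ∀ x, proj (φ x) = proj x) : φ = .refl := by
  choose β hβ using fun w b => proj_eq_inr_iff.1 (h (inr (w, b)))
  choose ι hι using fun v i => proj_eq_inl_iff.1 (h (inl (v, i)))
  have hcoord : ∀ v i j, (ι v i).1 j = β (nb v j) (i.1 j) := by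
    intro v i j
    have := φ.map_adj_iff.2 (adj_inl_inr.2 ⟨j, rfl, rfl⟩ :
      (multipede nb).Adj (inl (v, i)) (inr (nb v j, i.1 j)))
    rw [hι, hβ, adj_inl_inr] at this
    obtain ⟨j', hj', hi⟩ := this
    rwa [hnb v hj'] at hi
  have hβ_ne : ∀ w, β w false ≠ β w true := fun w hβw => by
    have := φ.injective (by rw [hβ, hβ, hβw] : φ (inr (w, false)) = φ (inr (w, true)))
    simp at this
  have hmask : ∀ w, β w false = false := eq_false_of_even_card_filter hnb hodd _ fun v => by
    simpa [hcoord] using (ι v ⟨fun _ => false, by decide⟩).2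
  have hβ_id : ∀ w b, β w b = b := by
    intro w b
    cases b
    · exact hmask w
    · simpa [hmask] using (hβ_ne w).symm
  ext (⟨v, i⟩ | ⟨w, b⟩)
  · rw [hι]
    congr
    ext j
    simp [hcoord, hβ_id]
  · rw [hβ, hβ_id]
    rfl

variable [Fintype V]

theorem isLeft_apply (hnb : ∀ v, Injective (nb v)) (φ : multipede nb ≃g multipede nb)
    (x : (V × EvenWeightVec) ⊕ (W × Bool)) : (φ x).isLeft = x.isLeft := by
  rw [Bool.eq_iff_iff, ← odd_ncard_neighborSet_iff hnb, ← odd_ncard_neighborSet_iff hnb,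
    φ.ncard_neighborSet]

theorem exists_apply_inl (hnb : ∀ v, Injective (nb v)) (φ : multipede nb ≃g multipede nb)
    (p : V × EvenWeightVec) : ∃ p', φ (inl p) = inl p' :=
  isLeft_iff.1 (by rw [isLeft_apply hnb]; rfl)

theorem exists_apply_inr (hnb : ∀ v, Injective (nb v)) (φ : multipede nb ≃g multipede nb)
    (q : W × Bool) : ∃ q', φ (inr q) = inr q' :=
  isRight_iff.1 (by simpa using isLeft_apply hnb φ (inr q))

theorem proj_apply_inr_eq_of_fst_eq (hnb : ∀ v, Injective (nb v))
    (φ : multipede nb ≃g multipede nb)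
    (htwin : Injective fun w => secondNbhd (baseGraph nb) (inr w)) {q q' : W × Bool}
    (h : q.1 = q'.1) :
    proj (φ (inr q)) = proj (φ (inr q')) := by
  obtain ⟨r, hr⟩ := exists_apply_inr hnb φ q
  obtain ⟨r', hr'⟩ := exists_apply_inr hnb φ q'
  have hS : secondNbhd (multipede nb) (φ (inr q)) = secondNbhd (multipede nb) (φ (inr q')) := by
    rw [φ.secondNbhd_apply, φ.secondNbhd_apply, secondNbhd_inr hnb, secondNbhd_inr hnb, h]
  rw [hr, hr', secondNbhd_inr hnb, secondNbhd_inr hnb] at hS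
  rw [hr, hr', proj_inr, proj_inr, htwin (Set.preimage_injective.2 proj_surjective hS :)]

theorem neighborSet_proj_apply_inl (hnb : ∀ v, Injective (nb v))
    (φ : multipede nb ≃g multipede nb) (v : V) (i : EvenWeightVec) :
    (baseGraph nb).neighborSet (proj (φ (inl (v, i)))) =
      Set.range fun j => proj (φ (inr (nb v j, i.1 j))) := by
  obtain ⟨p, hp⟩ := exists_apply_inl hnb φ (v, i)
  rw [hp, proj_inl, ← image_proj_neighborSet_inl, ← hp, ← φ.image_neighborSet, neighborSet_inl,
    ← Set.range_comp, ← Set.range_comp]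
  rfl

theorem proj_apply_eq_of_proj_eq [Subsingleton (baseGraph nb ≃g baseGraph nb)]
    (hnb : ∀ v, Injective (nb v)) (φ : multipede nb ≃g multipede nb)
    (htwin : Injective fun w => secondNbhd (baseGraph nb) (inr w))
    {x y : (V × EvenWeightVec) ⊕ (W × Bool)} (h : proj x = proj y) :
    proj (φ x) = proj (φ y) := by
  rcases x with ⟨v, i⟩ | q <;> rcases y with ⟨v', i'⟩ | q' <;> simp at h
  · subst h
    apply eq_of_neighborSet_eq (G := baseGraph nb)
    rw [neighborSet_proj_apply_inl hnb, neighborSet_proj_apply_inl hnb]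
    congr 1
    funext j
    exact proj_apply_inr_eq_of_fst_eq hnb φ htwin rfl
  · exact proj_apply_inr_eq_of_fst_eq hnb φ htwin h

theorem proj_apply [Subsingleton (baseGraph nb ≃g baseGraph nb)] (hnb : ∀ v, Injective (nb v))
    (φ : multipede nb ≃g multipede nb)
    (htwin : Injective fun w => secondNbhd (baseGraph nb) (inr w))
    (x : (V × EvenWeightVec) ⊕ (W × Bool)) : proj (φ x) = proj x := by
  have hφ : ∀ x y, proj (φ x) = proj (φ y) ↔ proj x = proj y := fun x y =>
    ⟨fun h => by simpa using proj_apply_eq_of_proj_eq hnb φ.symm htwin h,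
      proj_apply_eq_of_proj_eq hnb φ htwin⟩
  obtain ⟨ψ, hψ⟩ :=
    φ.exists_semiconj_of_adj_iff proj_surjective (fun _ _ => baseGraph_adj_iff) hφ
  rw [hψ, Subsingleton.elim ψ .refl]
  rfl

theorem subsingleton_iso [Fintype W] [DecidableEq W] (hnb : ∀ v, Injective (nb v))
    (hodd : ∀ X : Finset W, X.Nonempty → ∃ v, Odd (X.filter fun w => ∃ j, nb v j = w).card)
    [Subsingleton (baseGraph nb ≃g baseGraph nb)]
    (htwin : Injective fun w => secondNbhd (baseGraph nb) (inr w)) :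
    Subsingleton (multipede nb ≃g multipede nb) :=
  subsingleton_of_forall_eq .refl fun φ =>
    eq_refl_of_proj_apply hnb φ hodd (proj_apply hnb φ htwin)

end Multipede

theorem multipede_rigid_general {V W : Type*} [Fintype V] [Fintype W] [DecidableEq W]
    (E : V → W → Prop) [∀ v, DecidablePred (E v)]
    (nb : V → Fin 3 → W)
    -- (1) every `v ∈ V` has degree 3, with neighbors `nb v 0, nb v 1, nb v 2`
    (hnb : ∀ v, Function.Injective (nb v))
    (hnbE : ∀ v w, E v w ↔ ∃ j, nb v j = w)
    -- (2) G is odd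
    (hodd : ∀ X : Finset W, X.Nonempty → ∃ v : V, Odd (X.filter (fun w => E v w)).card)
    -- (3) G is rigid
    (hrigid : ∀ σ : Equiv.Perm (V ⊕ W),
      (∀ x y, (bipartiteGraph E).Adj (σ x) (σ y) ↔ (bipartiteGraph E).Adj x y) → σ = 1)
    -- (4) no two distinct vertices of `W` have equal second neighborhoods
    (htwin : ∀ w₁ w₂ : W,
      secondNbhd (bipartiteGraph E) (Sum.inr w₁) = secondNbhd (bipartiteGraph E) (Sum.inr w₂) →
      w₁ = w₂) :
    -- then the multipede graph `R(G)` is rigid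
    ∀ σ : Equiv.Perm
        ((V × {i : Fin 3 → Bool // Even (Finset.univ.filter (fun j => i j = true)).card})
          ⊕ (W × Bool)),
      (∀ x y, (multipede nb).Adj (σ x) (σ y) ↔ (multipede nb).Adj x y) → σ = 1 := by
  obtain rfl : E = fun v w => ∃ j, nb v j = w := funext₂ fun v w => propext (hnbE v w)
  have := SimpleGraph.subsingleton_iso_iff_forall_perm.2 hrigid
  exact SimpleGraph.subsingleton_iso_iff_forall_perm.1 <|
    Multipede.subsingleton_iso hnb (fun X hX => by convert hodd X hX) fun _ _ h => htwin _ _ h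

theorem multipede_rigid {V W : Type*} [Fintype V] [Fintype W] [DecidableEq V] [DecidableEq W]
    (E : V → W → Prop) [∀ v, DecidablePred (E v)]
    (nb : V → Fin 3 → W)
    -- (1) every `v ∈ V` has degree 3, with neighbors `nb v 0, nb v 1, nb v 2`
    (hnb : ∀ v, Function.Injective (nb v))
    (hnbE : ∀ v w, E v w ↔ ∃ j, nb v j = w)
    -- (2) G is odd
    (hodd : ∀ X : Finset W, X.Nonempty → ∃ v : V, Odd (X.filter (fun w => E v w)).card)
    -- (3) G is rigid
    (hrigid : ∀ σ : Equiv.Perm (V ⊕ W),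
      (∀ x y, (bipartiteGraph E).Adj (σ x) (σ y) ↔ (bipartiteGraph E).Adj x y) → σ = 1)
    -- (4) no two distinct vertices of `W` have equal second neighborhoods
    (htwin : ∀ w₁ w₂ : W,
      secondNbhd (bipartiteGraph E) (Sum.inr w₁) = secondNbhd (bipartiteGraph E) (Sum.inr w₂) →
      w₁ = w₂) :
    -- then the multipede graph `R(G)` is rigid
    ∀ σ : Equiv.Perm
        ((V × {i : Fin 3 → Bool // Even (Finset.univ.filter (fun j => i j = true)).card})
          ⊕ (W × Bool)),
      (∀ x y, (multipede nb).Adj (σ x) (σ y) ↔ (multipede nb).Adj x y) → σ = 1 :=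
  multipede_rigid_general E nb hnb hnbE hodd hrigid htwin
end
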